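/- Let d = (d_1, …, d_N) be positive reals with Σ_i d_i = 2π, L(d) the weighted ring Laplacian (entries as above), λ_1, λ_2 > 0. Consider the linear system α'' = -λ_1 L(d) α - λ_2 L(d) α' - α' on ℝ^N, with initial data satisfying Σ_i α_i(0) = 2π and Σ_i α_i'(0) = 0. Then α(t) → d and α'(t) → 0 as t → ∞. -/

import Mathlib

noncomputable def ringLap {N : ℕ} [NeZero N] (d : Fin N → ℝ) : Matrix (Fin N) (Fin N) ℝ :=
  Matrix.of fun i j =>
    (if j = i then d (i + 1) / (d (i + 1) + d i) + d (i - 1) / (d i + d (i - 1)) else 0)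
      - (if j = i + 1 then d i / (d (i + 1) + d i) else 0)
      - (if j = i - 1 then d i / (d i + d (i - 1)) else 0)

section Aux
variable {N : ℕ} [NeZero N] (d : Fin N → ℝ)

lemma ringLap_mulVec (x : Fin N → ℝ) (i : Fin N) :
    (ringLap d).mulVec x i
      = (d (i + 1) / (d (i + 1) + d i) + d (i - 1) / (d i + d (i - 1))) * x i
        - d i / (d (i + 1) + d i) * x (i + 1)
        - d i / (d i + d (i - 1)) * x (i - 1) := by
  unfold Matrix.mulVec dotProduct ringLap
  simp only [Matrix.of_apply, sub_mul, ite_mul, zero_mul, Finset.sum_sub_distrib,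
    Finset.sum_ite_eq', Finset.mem_univ, if_true]

/-- column sums of `ringLap` vanish: `∑ i (L x)_i = 0`. -/
lemma sum_ringLap_mulVec (x : Fin N → ℝ) :
    ∑ i, (ringLap d).mulVec x i = 0 := by
  simp only [ringLap_mulVec]
  rw [Finset.sum_sub_distrib, Finset.sum_sub_distrib]
  have h1 : ∑ i, d i / (d (i + 1) + d i) * x (i + 1)
      = ∑ i, d (i - 1) / (d i + d (i - 1)) * x i := by
    apply Fintype.sum_equiv (Equiv.addRight (1 : Fin N))
    intro j
    simp [Equiv.coe_addRight, add_sub_cancel_right]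
  have h2 : ∑ i, d i / (d i + d (i - 1)) * x (i - 1)
      = ∑ i, d (i + 1) / (d (i + 1) + d i) * x i := by
    apply Fintype.sum_equiv (Equiv.subRight (1 : Fin N))
    intro j
    simp [Equiv.subRight_apply, sub_add_cancel]
  rw [h1, h2, ← Finset.sum_sub_distrib, ← Finset.sum_sub_distrib]
  apply Finset.sum_eq_zero
  intro i _
  ring

lemma ringLap_self (hd : ∀ i, 0 < d i) : (ringLap d).mulVec d = 0 := by
  funext i
  have h1 : d (i + 1) + d i ≠ 0 := by have := hd (i+1); have := hd i; linarith
  have h2 : d i + d (i - 1) ≠ 0 := by have := hd (i-1); have := hd i; linarith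
  simp only [ringLap_mulVec, Pi.zero_apply]
  field_simp
  ring

end Aux
section Forms
variable {N : ℕ} [NeZero N] (d : Fin N → ℝ)

/-- weighted inner product `∑ x i * y i / d i`. -/
noncomputable def Cform (x y : Fin N → ℝ) : ℝ := ∑ i, x i * y i / d i

/-- the Dirichlet form `⟪x, L y⟫`. -/
noncomputable def Bform (x y : Fin N → ℝ) : ℝ := Cform d x ((ringLap d).mulVec y)

lemma Cform_comm (x y : Fin N → ℝ) : Cform d x y = Cform d y x := by
  unfold Cform; exact Finset.sum_congr rfl fun i _ => by ring

lemma Cform_add_left (x x' y : Fin N → ℝ) :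
    Cform d (x + x') y = Cform d x y + Cform d x' y := by
  unfold Cform
  rw [← Finset.sum_add_distrib]
  exact Finset.sum_congr rfl fun i _ => by simp [Pi.add_apply]; ring

lemma Cform_smul_left (c : ℝ) (x y : Fin N → ℝ) :
    Cform d (c • x) y = c * Cform d x y := by
  unfold Cform
  rw [Finset.mul_sum]
  exact Finset.sum_congr rfl fun i _ => by simp [Pi.smul_apply]; ring

lemma Cform_add_right (x y y' : Fin N → ℝ) :
    Cform d x (y + y') = Cform d x y + Cform d x y' := by
  rw [Cform_comm, Cform_add_left, Cform_comm d y, Cform_comm d y']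

lemma Cform_smul_right (c : ℝ) (x y : Fin N → ℝ) :
    Cform d x (c • y) = c * Cform d x y := by
  rw [Cform_comm, Cform_smul_left, Cform_comm d y]

lemma Cform_combo (a b : ℝ) (x y z w : Fin N → ℝ) :
    Cform d x (-(a • y) - b • z - w)
      = -(a * Cform d x y) - b * Cform d x z - Cform d x w := by
  have h1 : -(a • y) - b • z - w = ((-a) • y) + (((-b) • z) + ((-1 : ℝ) • w)) := by
    funext i; simp; ring
  rw [h1, Cform_add_right, Cform_add_right, Cform_smul_right, Cform_smul_right,
    Cform_smul_right]
  ring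

lemma Bform_combo (a b : ℝ) (x y z w : Fin N → ℝ) :
    Bform d x (-(a • y) - b • z - w)
      = -(a * Bform d x y) - b * Bform d x z - Bform d x w := by
  unfold Bform
  rw [show (ringLap d).mulVec (-(a • y) - b • z - w)
      = -(a • (ringLap d).mulVec y) - b • (ringLap d).mulVec z - (ringLap d).mulVec w by
    simp [Matrix.mulVec_sub, Matrix.mulVec_neg, Matrix.mulVec_smul]]
  exact Cform_combo d a b x _ _ _

lemma Bform_add_left (x x' y : Fin N → ℝ) :
    Bform d (x + x') y = Bform d x y + Bform d x' y := Cform_add_left d x x' _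

lemma Bform_smul_left (c : ℝ) (x y : Fin N → ℝ) :
    Bform d (c • x) y = c * Bform d x y := Cform_smul_left d c x _

lemma Bform_add_right (x y y' : Fin N → ℝ) :
    Bform d x (y + y') = Bform d x y + Bform d x y' := by
  unfold Bform; rw [Matrix.mulVec_add, Cform_add_right]

lemma Bform_smul_right (c : ℝ) (x y : Fin N → ℝ) :
    Bform d x (c • y) = c * Bform d x y := by
  unfold Bform
  rw [show (ringLap d).mulVec (c • y) = c • (ringLap d).mulVec y by
    simp [Matrix.mulVec_smul], Cform_smul_right]

/-- The key edge-sum identity for the Dirichlet form. -/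
lemma Bform_eq_edge (hd : ∀ i, 0 < d i) (x y : Fin N → ℝ) :
    Bform d x y = ∑ i, (d i * d (i + 1) / (d i + d (i + 1))) *
      ((x i / d i - x (i + 1) / d (i + 1)) * (y i / d i - y (i + 1) / d (i + 1))) := by
  unfold Bform Cform
  have hF : ∀ i : Fin N,
      x i * ((ringLap d).mulVec y) i / d i
        = (x i * (d (i + 1) / (d (i + 1) + d i)) * y i / d i
            - x i * (d i / (d (i + 1) + d i)) * y (i + 1) / d i)
          + (fun j : Fin N => x (j + 1) * (d j / (d (j + 1) + d j)) * y (j + 1) / d (j + 1)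
              - x (j + 1) * (d (j + 1) / (d (j + 1) + d j)) * y j / d (j + 1)) (i - 1) := by
    intro i
    simp only [ringLap_mulVec, sub_add_cancel]
    have h1 : d i ≠ 0 := ne_of_gt (hd i)
    have h3 : d (i + 1) + d i ≠ 0 := by have := hd (i + 1); have := hd i; linarith
    have h4 : d i + d (i - 1) ≠ 0 := by have := hd (i - 1); have := hd i; linarith
    field_simp
    ring
  rw [Finset.sum_congr rfl fun i _ => hF i, Finset.sum_add_distrib]
  rw [Fintype.sum_equiv (Equiv.subRight (1 : Fin N))
    (fun i => (fun j : Fin N => x (j + 1) * (d j / (d (j + 1) + d j)) * y (j + 1) / d (j + 1)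
      - x (j + 1) * (d (j + 1) / (d (j + 1) + d j)) * y j / d (j + 1)) (i - 1))
    (fun j => x (j + 1) * (d j / (d (j + 1) + d j)) * y (j + 1) / d (j + 1)
      - x (j + 1) * (d (j + 1) / (d (j + 1) + d j)) * y j / d (j + 1))
    (fun i => rfl)]
  rw [← Finset.sum_add_distrib]
  refine Finset.sum_congr rfl fun i _ => ?_
  have h1 : d i ≠ 0 := ne_of_gt (hd i)
  have h2 : d (i + 1) ≠ 0 := ne_of_gt (hd (i + 1))
  have h3 : d (i + 1) + d i ≠ 0 := by have := hd (i + 1); have := hd i; linarith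
  have h3' : d i + d (i + 1) ≠ 0 := by have := hd (i + 1); have := hd i; linarith
  field_simp
  ring

lemma Bform_comm (hd : ∀ i, 0 < d i) (x y : Fin N → ℝ) :
    Bform d x y = Bform d y x := by
  rw [Bform_eq_edge d hd, Bform_eq_edge d hd]
  exact Finset.sum_congr rfl fun i _ => by ring

lemma Bform_nonneg (hd : ∀ i, 0 < d i) (x : Fin N → ℝ) :
    0 ≤ Bform d x x := by
  rw [Bform_eq_edge d hd]
  refine Finset.sum_nonneg fun i _ => ?_
  have h1 := hd i
  have h2 := hd (i + 1)
  have : (x i / d i - x (i + 1) / d (i + 1)) * (x i / d i - x (i + 1) / d (i + 1))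
      = (x i / d i - x (i + 1) / d (i + 1)) ^ 2 := by ring
  rw [this]
  positivity

lemma Cform_nonneg (hd : ∀ i, 0 < d i) (x : Fin N → ℝ) :
    0 ≤ Cform d x x := by
  unfold Cform
  refine Finset.sum_nonneg fun i _ => ?_
  have h1 := hd i
  have : x i * x i / d i = (x i) ^ 2 / d i := by ring
  rw [this]; positivity

end Forms
section Coercive
variable {N : ℕ} [NeZero N] (d : Fin N → ℝ)

lemma Bform_expand (hd : ∀ i, 0 < d i) (c e : ℝ) (x y : Fin N → ℝ) :
    Bform d (c • x + e • y) (c • x + e • y)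
      = c ^ 2 * Bform d x x + 2 * c * e * Bform d x y + e ^ 2 * Bform d y y := by
  simp only [Bform_add_left, Bform_add_right, Bform_smul_left, Bform_smul_right]
  rw [Bform_comm d hd y x]
  ring

lemma Cform_expand (c e : ℝ) (x y : Fin N → ℝ) :
    Cform d (c • x + e • y) (c • x + e • y)
      = c ^ 2 * Cform d x x + 2 * c * e * Cform d x y + e ^ 2 * Cform d y y := by
  simp only [Cform_add_left, Cform_add_right, Cform_smul_left, Cform_smul_right]
  rw [Cform_comm d y x]
  ring

lemma Bform_cs (hd : ∀ i, 0 < d i) (c e : ℝ) (x y : Fin N → ℝ) :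
    0 ≤ c ^ 2 * Bform d x x + 2 * c * e * Bform d x y + e ^ 2 * Bform d y y := by
  rw [← Bform_expand d hd]; exact Bform_nonneg d hd _

lemma Cform_cs (hd : ∀ i, 0 < d i) (c e : ℝ) (x y : Fin N → ℝ) :
    0 ≤ c ^ 2 * Cform d x x + 2 * c * e * Cform d x y + e ^ 2 * Cform d y y := by
  rw [← Cform_expand d]; exact Cform_nonneg d hd _

open Fin.NatCast in
lemma Bform_pos (hd : ∀ i, 0 < d i) (x : Fin N → ℝ) (hx0 : ∑ i, x i = 0)
    (hxne : x ≠ 0) : 0 < Bform d x x := by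
  rcases lt_or_eq_of_le (Bform_nonneg d hd x) with h | h
  · exact h
  exfalso
  -- all edge terms vanish
  have hterm : ∀ i : Fin N, x (i + 1) / d (i + 1) = x i / d i := by
    have h0 : ∑ i, (d i * d (i + 1) / (d i + d (i + 1))) *
        ((x i / d i - x (i + 1) / d (i + 1)) * (x i / d i - x (i + 1) / d (i + 1))) = 0 := by
      rw [← Bform_eq_edge d hd x x]; exact h.symm
    have hnn : ∀ i ∈ Finset.univ, (0:ℝ) ≤ (d i * d (i + 1) / (d i + d (i + 1))) *
        ((x i / d i - x (i + 1) / d (i + 1)) * (x i / d i - x (i + 1) / d (i + 1))) := by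
      intro i _
      have h1 := hd i; have h2 := hd (i + 1)
      have he : (x i / d i - x (i + 1) / d (i + 1)) * (x i / d i - x (i + 1) / d (i + 1))
          = (x i / d i - x (i + 1) / d (i + 1)) ^ 2 := by ring
      rw [he]; positivity
    have hz := (Finset.sum_eq_zero_iff_of_nonneg hnn).mp h0
    intro i
    have hzi := hz i (Finset.mem_univ i)
    have hw : 0 < d i * d (i + 1) / (d i + d (i + 1)) := by
      have := hd i; have := hd (i + 1); positivity
    rcases mul_eq_zero.mp hzi with h' | h'
    · exact absurd h' (ne_of_gt hw)
    · have := mul_self_eq_zero.mp h'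
      linarith
  -- hence x i / d i is constant
  have hconst : ∀ i : Fin N, x i / d i = x 0 / d 0 := by
    have hnat : ∀ n : ℕ, x (n : Fin N) / d (n : Fin N) = x 0 / d 0 := by
      intro n
      induction n with
      | zero => norm_num
      | succ k ih =>
        have : ((k + 1 : ℕ) : Fin N) = ((k : ℕ) : Fin N) + 1 := by push_cast; ring
        rw [this, hterm ((k : ℕ) : Fin N), ih]
    intro i
    have : ((i.val : ℕ) : Fin N) = i := Fin.cast_val_eq_self i
    rw [← this, hnat]
  have hx : ∀ i, x i = (x 0 / d 0) * d i := by
    intro i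
    have hdi : d i ≠ 0 := ne_of_gt (hd i)
    have h' : x i = x i / d i * d i := (div_mul_cancel₀ _ hdi).symm
    rw [h', hconst i]
  have hsd : 0 < ∑ i, d i :=
    Finset.sum_pos (fun i _ => hd i) ⟨0, Finset.mem_univ 0⟩
  have : ∑ i, x i = (x 0 / d 0) * ∑ i, d i := by
    rw [Finset.mul_sum]; exact Finset.sum_congr rfl fun i _ => hx i
  rw [hx0] at this
  have hc : x 0 / d 0 = 0 := by
    rcases mul_eq_zero.mp this.symm with h' | h'
    · exact h'
    · exact absurd h' (ne_of_gt hsd)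
  apply hxne
  funext i
  simp [hx i, hc]

lemma continuous_Bform_diag : Continuous fun x : Fin N → ℝ => Bform d x x := by
  unfold Bform Cform Matrix.mulVec dotProduct
  fun_prop

lemma coercive (hN : 2 ≤ N) (hd : ∀ i, 0 < d i) :
    ∃ μ > 0, ∀ x : Fin N → ℝ, (∑ i, x i = 0) → μ * (∑ i, (x i) ^ 2) ≤ Bform d x x := by
  classical
  set K : Set (Fin N → ℝ) := {x | (∑ i, x i = 0) ∧ ∑ i, (x i) ^ 2 = 1} with hK
  have hcont1 : Continuous fun x : Fin N → ℝ => ∑ i, x i := by fun_prop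
  have hcont2 : Continuous fun x : Fin N → ℝ => ∑ i, (x i) ^ 2 := by fun_prop
  have hclosed : IsClosed K := by
    have : K = ((fun x : Fin N → ℝ => ∑ i, x i) ⁻¹' {0})
        ∩ ((fun x : Fin N → ℝ => ∑ i, (x i) ^ 2) ⁻¹' {1}) := by
      ext x; simp [hK, Set.mem_setOf_eq]
    rw [this]
    exact (isClosed_singleton.preimage hcont1).inter (isClosed_singleton.preimage hcont2)
  have hbdd : Bornology.IsBounded K := by
    apply (Metric.isBounded_closedBall (x := (0 : Fin N → ℝ)) (r := 1)).subset
    intro x hx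
    simp only [Metric.mem_closedBall, dist_zero_right]
    rw [pi_norm_le_iff_of_nonneg (by norm_num)]
    intro i
    have h1 : (x i) ^ 2 ≤ ∑ j, (x j) ^ 2 :=
      Finset.single_le_sum (fun j _ => sq_nonneg (x j)) (Finset.mem_univ i)
    rw [hx.2] at h1
    rw [Real.norm_eq_abs]
    rw [abs_le]; constructor <;> nlinarith
  have hcompact : IsCompact K := Metric.isCompact_of_isClosed_isBounded hclosed hbdd
  have h01 : (0 : Fin N) ≠ 1 := by
    intro h
    have h' := congrArg Fin.val h
    rw [Fin.val_zero, Fin.val_one', Nat.mod_eq_of_lt (by omega)] at h'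
    omega
  have hne : K.Nonempty := by
    refine ⟨(Real.sqrt 2)⁻¹ • (Pi.single (0 : Fin N) (1 : ℝ) - Pi.single (1 : Fin N) (1 : ℝ)), ?_, ?_⟩
    · simp only [Pi.smul_apply, Pi.sub_apply, smul_eq_mul, ← Finset.mul_sum,
        Finset.sum_sub_distrib, Finset.sum_pi_single', Finset.mem_univ, if_true]
      ring
    · have hpt : ∀ i : Fin N, ((Pi.single (0 : Fin N) (1 : ℝ) : Fin N → ℝ) i - (Pi.single (1 : Fin N) (1 : ℝ) : Fin N → ℝ) i) ^ 2
          = (if i = 0 then (1 : ℝ) else 0) + (if i = 1 then (1 : ℝ) else 0) := by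
        intro i
        by_cases h0 : i = 0
        · subst h0; simp [Pi.single_apply, h01, Ne.symm h01]
        · by_cases h1 : i = 1
          · subst h1; simp [Pi.single_apply, h01, Ne.symm h01, h0]
          · simp [Pi.single_apply, h0, h1]
      simp only [Pi.smul_apply, Pi.sub_apply, smul_eq_mul, mul_pow, ← Finset.mul_sum]
      rw [Finset.sum_congr rfl fun i _ => hpt i, Finset.sum_add_distrib]
      simp only [Finset.sum_ite_eq', Finset.mem_univ, if_true]
      rw [inv_pow, Real.sq_sqrt (by norm_num)]
      norm_num
  obtain ⟨m, hmK, hmin⟩ := hcompact.exists_isMinOn hne (continuous_Bform_diag d).continuousOn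
  have hmne : m ≠ 0 := by
    intro h
    rw [h] at hmK
    simp [hK, Set.mem_setOf_eq] at hmK
  have hμ : 0 < Bform d m m := Bform_pos d hd m hmK.1 hmne
  refine ⟨Bform d m m, hμ, fun x hx0 => ?_⟩
  by_cases hxz : x = 0
  · subst hxz
    have : Bform d 0 0 = 0 := by
      unfold Bform Cform
      simp [Matrix.mulVec_zero]
    simp [this]
  · have hs : 0 < ∑ i, (x i) ^ 2 := by
      obtain ⟨i, hi⟩ := Function.ne_iff.mp hxz
      exact Finset.sum_pos' (fun j _ => sq_nonneg (x j))
        ⟨i, Finset.mem_univ i, lt_of_le_of_ne (sq_nonneg _) (Ne.symm (pow_ne_zero 2 hi))⟩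
    set s := ∑ i, (x i) ^ 2 with hsdef
    have hsq : Real.sqrt s > 0 := Real.sqrt_pos.mpr hs
    have hyK : (Real.sqrt s)⁻¹ • x ∈ K := by
      constructor
      · simp only [Pi.smul_apply, smul_eq_mul, ← Finset.mul_sum, hx0, mul_zero]
      · simp only [Pi.smul_apply, smul_eq_mul, mul_pow, ← Finset.mul_sum, ← hsdef]
        rw [inv_pow, Real.sq_sqrt hs.le]
        field_simp
    have h1 := hmin hyK
    have h2 : Bform d ((Real.sqrt s)⁻¹ • x) ((Real.sqrt s)⁻¹ • x)
        = s⁻¹ * Bform d x x := by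
      rw [Bform_smul_left, Bform_smul_right, ← mul_assoc]
      have hss : (Real.sqrt s)⁻¹ * (Real.sqrt s)⁻¹ = s⁻¹ := by
        rw [← mul_inv, Real.mul_self_sqrt hs.le]
      rw [hss]
    simp only [Set.mem_setOf_eq] at h1
    rw [h2] at h1
    calc Bform d m m * s ≤ (s⁻¹ * Bform d x x) * s := by
          apply mul_le_mul_of_nonneg_right h1 hs.le
      _ = Bform d x x := by field_simp

end Coercive
section Deriv
variable {N : ℕ} [NeZero N] (d : Fin N → ℝ)

lemma hasDerivAt_Cform (f g : ℝ → Fin N → ℝ) (f' g' : Fin N → ℝ) (t : ℝ)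
    (hf : ∀ i, HasDerivAt (fun s => f s i) (f' i) t)
    (hg : ∀ i, HasDerivAt (fun s => g s i) (g' i) t) :
    HasDerivAt (fun s => Cform d (f s) (g s)) (Cform d f' (g t) + Cform d (f t) g') t := by
  have h : HasDerivAt (fun s => ∑ i, f s i * g s i / d i)
      (∑ i, (f' i * g t i + f t i * g' i) / d i) t :=
    HasDerivAt.fun_sum fun i _ => ((hf i).mul (hg i)).div_const (d i)
  have he : (∑ i, (f' i * g t i + f t i * g' i) / d i)
      = Cform d f' (g t) + Cform d (f t) g' := by
    unfold Cform
    rw [← Finset.sum_add_distrib]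
    exact Finset.sum_congr rfl fun i _ => by ring
  rw [← he]
  exact h

lemma hasDerivAt_mulVec (g : ℝ → Fin N → ℝ) (g' : Fin N → ℝ) (t : ℝ)
    (hg : ∀ i, HasDerivAt (fun s => g s i) (g' i) t) (i : Fin N) :
    HasDerivAt (fun s => (ringLap d).mulVec (g s) i) ((ringLap d).mulVec g' i) t := by
  unfold Matrix.mulVec dotProduct
  exact HasDerivAt.fun_sum fun j _ => (hg j).const_mul _

lemma hasDerivAt_Bform (f g : ℝ → Fin N → ℝ) (f' g' : Fin N → ℝ) (t : ℝ)
    (hf : ∀ i, HasDerivAt (fun s => f s i) (f' i) t)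
    (hg : ∀ i, HasDerivAt (fun s => g s i) (g' i) t) :
    HasDerivAt (fun s => Bform d (f s) (g s)) (Bform d f' (g t) + Bform d (f t) g') t := by
  unfold Bform
  exact hasDerivAt_Cform d f (fun s => (ringLap d).mulVec (g s)) f'
    ((ringLap d).mulVec g') t hf (hasDerivAt_mulVec d g g' t hg)

lemma sumsq_le_Cform (hd : ∀ i, 0 < d i) (x : Fin N → ℝ) :
    ∑ i, (x i) ^ 2 ≤ (∑ i, d i) * Cform d x x := by
  unfold Cform
  rw [Finset.mul_sum]
  apply Finset.sum_le_sum
  intro i _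
  have hdi := hd i
  have hds : d i ≤ ∑ j, d j := Finset.single_le_sum (fun j _ => (hd j).le) (Finset.mem_univ i)
  have h1 : x i ^ 2 = d i * (x i * x i / d i) := by field_simp
  rw [h1]
  apply mul_le_mul_of_nonneg_right hds
  exact div_nonneg (mul_self_nonneg _) hdi.le

end Deriv

section Scalar

lemma decay_scalar (lam1 lam2 Kc ε B1 B2 B3 C1 C2 C3 : ℝ)
    (h1 : 0 < lam1) (h2 : 0 < lam2) (hK : 0 < Kc)
    (hεpos : 0 < ε) (hεone : ε ≤ 1)
    (hεa : ε * lam2 ≤ 2 * lam1) (hεb : ε * (lam1 + 3 * Kc) ≤ lam1)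
    (hB1 : 0 ≤ B1) (hB3 : 0 ≤ B3) (hC1 : 0 ≤ C1) (hC3 : 0 ≤ C3)
    (hBcs : ∀ c e : ℝ, 0 ≤ c^2*B1 + 2*c*e*B2 + e^2*B3)
    (hCcs : ∀ c e : ℝ, 0 ≤ c^2*C1 + 2*c*e*C2 + e^2*C3)
    (hCB1 : C1 ≤ Kc * B1) :
    -2*lam2*B3 - 2*C3 + ε*C3 - ε*lam1*B1 - ε*lam2*B2 - ε*C2
      ≤ -(ε/3)*(lam1*B1 + C3 + ε*C2) := by
  -- H1 : -(ε*lam2*B2) ≤ (ε*lam1/2)*B1 + lam2*B3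
  have hsq : Real.sqrt (ε*lam1) ^ 2 = ε*lam1 := Real.sq_sqrt (by positivity)
  have hsqpos : 0 < Real.sqrt (ε*lam1) := Real.sqrt_pos.mpr (by positivity)
  have hCSB := hBcs (Real.sqrt (ε*lam1)) ((ε*lam2)/Real.sqrt (ε*lam1))
  have hc2 : (Real.sqrt (ε*lam1))^2 * B1 = ε*lam1*B1 := by rw [hsq]
  have hce : 2 * Real.sqrt (ε*lam1) * ((ε*lam2)/Real.sqrt (ε*lam1)) * B2
      = 2*(ε*lam2)*B2 := by
    rw [show 2 * Real.sqrt (ε*lam1) * ((ε*lam2)/Real.sqrt (ε*lam1))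
        = 2 * ((ε*lam2)/Real.sqrt (ε*lam1) * Real.sqrt (ε*lam1)) by ring,
      div_mul_cancel₀ _ (ne_of_gt hsqpos)]
  have he2 : ((ε*lam2)/Real.sqrt (ε*lam1))^2 * B3 = (ε*lam2^2/lam1)*B3 := by
    rw [div_pow, hsq]
    rw [show (ε*lam2)^2 / (ε*lam1) = ε*lam2^2/lam1 by
      field_simp]
  rw [hc2, hce, he2] at hCSB
  have hQ : (ε*lam2^2/lam1)*B3 ≤ 2*lam2*B3 := by
    apply mul_le_mul_of_nonneg_right _ hB3
    rw [div_le_iff₀ h1]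
    linarith [mul_le_mul_of_nonneg_right hεa h2.le]
  have H1 : -(ε*lam2*B2) ≤ (ε*lam1/2)*B1 + lam2*B3 := by linarith
  -- H2
  have hCSC := hCcs ε 1
  have H2 : -(ε*C2 - (ε^2/3)*C2) ≤ (ε^2/2)*C1 + (1/2)*C3 := by
    rcases le_or_gt 0 C2 with h | h
    · have hco : 0 ≤ ε - ε^2/3 := by
        nlinarith [mul_le_mul_of_nonneg_right hεone hεpos.le]
      have h0 : 0 ≤ (ε - ε^2/3) * C2 := mul_nonneg hco h
      have hr : 0 ≤ (ε^2/2)*C1 + (1/2)*C3 := by positivity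
      nlinarith [h0, hr]
    · have h3 : (ε^2/3)*C2 ≤ 0 := mul_nonpos_of_nonneg_of_nonpos (by positivity) h.le
      linarith
  have hKC : (ε^2/2)*C1 ≤ (ε^2/2)*(Kc*B1) :=
    mul_le_mul_of_nonneg_left hCB1 (by positivity)
  have hεKc : ε*Kc ≤ lam1/3 := by
    have hεl : 0 < ε*lam1 := by positivity
    linarith
  have hfin : (ε^2/2)*(Kc*B1) ≤ (ε*lam1/6)*B1 := by
    have h' := mul_le_mul_of_nonneg_right
      (mul_le_mul_of_nonneg_left hεKc hεpos.le) hB1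
    linarith [h']
  have hεC3 : ε*C3 ≤ C3 := by
    have := mul_le_mul_of_nonneg_right hεone hC3
    linarith
  have hlB3 : 0 ≤ lam2*B3 := mul_nonneg h2.le hB3
  linarith

lemma cs_family_B {N : ℕ} [NeZero N] (d : Fin N → ℝ) (hd : ∀ i, 0 < d i)
    (x y : Fin N → ℝ) (c e : ℝ) :
    0 ≤ c^2 * Bform d x x + 2*c*e * Bform d x y + e^2 * Bform d y y := by
  have := Bform_cs d hd c e x y
  linarith

lemma cs_family_C {N : ℕ} [NeZero N] (d : Fin N → ℝ) (hd : ∀ i, 0 < d i)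
    (x y : Fin N → ℝ) (c e : ℝ) :
    0 ≤ c^2 * Cform d x x + 2*c*e * Cform d x y + e^2 * Cform d y y := by
  have := Cform_cs d hd c e x y
  linarith

end Scalar
section Helper

lemma tendsto_zero_of_le_mul (q g : ℝ → ℝ) (a : ℝ) (ha : 0 < a)
    (hq0 : ∀ t, 0 ≤ q t) (hqg : ∀ᶠ t in Filter.atTop, a * q t ≤ g t)
    (hg : Filter.Tendsto g Filter.atTop (nhds 0)) :
    Filter.Tendsto q Filter.atTop (nhds 0) := by
  have h1 : Filter.Tendsto (fun t => a * q t) Filter.atTop (nhds 0) :=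
    tendsto_of_tendsto_of_tendsto_of_le_of_le' tendsto_const_nhds hg
      (Filter.Eventually.of_forall fun t => mul_nonneg ha.le (hq0 t)) hqg
  have h2 := h1.const_mul a⁻¹
  have h3 : (fun t => a⁻¹ * (a * q t)) = q :=
    funext fun t => inv_mul_cancel_left₀ (ne_of_gt ha) (q t)
  rw [h3] at h2
  simpa using h2

end Helper

set_option maxHeartbeats 1000000 in
open Matrix in
theorem stmt11 {N : ℕ} (hN : 2 ≤ N) [NeZero N] (d : Fin N → ℝ) (hd : ∀ i, 0 < d i)
    (hsum : ∑ i, d i = 2 * Real.pi)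
    (lam1 lam2 : ℝ) (h1 : 0 < lam1) (h2 : 0 < lam2)
    (α v : ℝ → Fin N → ℝ)
    (hα : ∀ t, HasDerivAt α (v t) t)
    (hv : ∀ t, HasDerivAt v
      (-(lam1 • (ringLap d).mulVec (α t)) - lam2 • (ringLap d).mulVec (v t) - v t) t)
    (hα0 : ∑ i, α 0 i = 2 * Real.pi) (hv0 : ∑ i, v 0 i = 0) :
    Filter.Tendsto α Filter.atTop (nhds d) ∧
      Filter.Tendsto v Filter.atTop (nhds 0) := by
  classical
  set Dr : ℝ → Fin N → ℝ := fun t =>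
    -(lam1 • (ringLap d).mulVec (α t)) - lam2 • (ringLap d).mulVec (v t) - v t with hDr
  -- componentwise derivatives
  have hαi : ∀ (t : ℝ) (i : Fin N), HasDerivAt (fun s => α s i) (v t i) t := by
    intro t i
    have h' := HasFDerivAt.comp_hasDerivAt t
      ((ContinuousLinearMap.proj (R := ℝ) (φ := fun _ : Fin N => ℝ) i).hasFDerivAt) (hα t)
    simpa [Function.comp_def] using h'
  have hvi : ∀ (t : ℝ) (i : Fin N), HasDerivAt (fun s => v s i) (Dr t i) t := by
    intro t i
    have h' := HasFDerivAt.comp_hasDerivAt t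
      ((ContinuousLinearMap.proj (R := ℝ) (φ := fun _ : Fin N => ℝ) i).hasFDerivAt) (hv t)
    simpa [Function.comp_def, hDr] using h'
  set β : ℝ → Fin N → ℝ := fun t i => α t i - d i with hβ
  have hβi : ∀ (t : ℝ) (i : Fin N), HasDerivAt (fun s => β s i) (v t i) t :=
    fun t i => (hαi t i).sub_const (d i)
  have hLαβ : ∀ t, (ringLap d).mulVec (α t) = (ringLap d).mulVec (β t) := by
    intro t
    have h' : α t = β t + d := by funext i; simp [hβ]
    rw [h', Matrix.mulVec_add, ringLap_self d hd, add_zero]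
  have hDecomp : ∀ (t : ℝ) (z : Fin N → ℝ),
      Cform d z (Dr t)
        = -(lam1 * Bform d z (β t)) - lam2 * Bform d z (v t) - Cform d z (v t) := by
    intro t z
    have h' : Dr t = -(lam1 • (ringLap d).mulVec (β t))
        - lam2 • (ringLap d).mulVec (v t) - v t := by
      simp only [hDr]
      rw [hLαβ t]
    rw [h', Cform_combo]
    rfl
  -- invariants
  have hsv : ∀ t, ∑ i, v t i = 0 := by
    have hder : ∀ t, HasDerivAt (fun s => ∑ i, v s i) (-(∑ i, v t i)) t := by
      intro t
      have h := HasDerivAt.fun_sum (u := Finset.univ) fun i (_ : i ∈ Finset.univ) => hvi t i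
      have he : ∑ i, Dr t i = -(∑ i, v t i) := by
        simp only [hDr]
        simp only [Pi.sub_apply, Pi.neg_apply, Pi.smul_apply, smul_eq_mul]
        rw [Finset.sum_sub_distrib, Finset.sum_sub_distrib, Finset.sum_neg_distrib,
          ← Finset.mul_sum, ← Finset.mul_sum, sum_ringLap_mulVec, sum_ringLap_mulVec]
        ring
      rw [← he]
      exact h
    have hg : ∀ t, HasDerivAt (fun s => (∑ i, v s i) * Real.exp s) 0 t := by
      intro t
      have h' : HasDerivAt (fun s => (∑ i, v s i) * Real.exp s)
          ((-(∑ i, v t i)) * Real.exp t + (∑ i, v t i) * Real.exp t) t :=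
        (hder t).fun_mul (Real.hasDerivAt_exp t)
      convert h' using 1
      ring
    have hconst := is_const_of_deriv_eq_zero (𝕜 := ℝ)
      (fun t => (hg t).differentiableAt) (fun t => (hg t).deriv)
    intro t
    have h' := hconst t 0
    rw [hv0, zero_mul] at h'
    exact (mul_eq_zero.mp h').resolve_right (Real.exp_ne_zero t)
  have hsβ : ∀ t, ∑ i, β t i = 0 := by
    have hder : ∀ t, HasDerivAt (fun s => ∑ i, β s i) 0 t := by
      intro t
      have h := HasDerivAt.fun_sum (u := Finset.univ) fun i (_ : i ∈ Finset.univ) => hβi t i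
      rw [hsv t] at h
      exact h
    have hconst := is_const_of_deriv_eq_zero (𝕜 := ℝ)
      (fun t => (hder t).differentiableAt) (fun t => (hder t).deriv)
    intro t
    have h0 : ∑ i, β 0 i = 0 := by
      simp only [hβ]
      rw [Finset.sum_sub_distrib, hα0, hsum, sub_self]
    rw [hconst t 0, h0]
  -- constants
  obtain ⟨μ, hμpos, hcoer⟩ := coercive d hN hd
  set pm : ℝ := ∑ i, (d i)⁻¹ with hpm
  have hpmpos : 0 < pm :=
    Finset.sum_pos (fun i _ => inv_pos.mpr (hd i)) ⟨0, Finset.mem_univ 0⟩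
  set Kc : ℝ := pm / μ with hKc
  have hKcpos : 0 < Kc := div_pos hpmpos hμpos
  have hCtoB : ∀ x : Fin N → ℝ, (∑ i, x i = 0) → Cform d x x ≤ Kc * Bform d x x := by
    intro x hx0
    have ha : Cform d x x ≤ pm * ∑ i, (x i) ^ 2 := by
      unfold Cform
      rw [Finset.mul_sum]
      apply Finset.sum_le_sum
      intro i _
      have hin : (d i)⁻¹ ≤ pm :=
        Finset.single_le_sum (fun j _ => (inv_pos.mpr (hd j)).le) (Finset.mem_univ i)
      have hrw : x i * x i / d i = (x i) ^ 2 * (d i)⁻¹ := by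
        rw [div_eq_mul_inv]; ring
      rw [hrw, mul_comm pm]
      exact mul_le_mul_of_nonneg_left hin (sq_nonneg _)
    have hb := hcoer x hx0
    have hc : ∑ i, (x i) ^ 2 ≤ Bform d x x / μ := by
      rw [le_div_iff₀ hμpos]; linarith
    calc Cform d x x ≤ pm * ∑ i, (x i) ^ 2 := ha
      _ ≤ pm * (Bform d x x / μ) := mul_le_mul_of_nonneg_left hc hpmpos.le
      _ = Kc * Bform d x x := by rw [hKc]; ring
  -- the small parameter ε
  set ε : ℝ := min (2 * lam1 / lam2) (lam1 / (lam1 + 3 * Kc)) with hε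
  have hεpos : 0 < ε := lt_min (by positivity) (by positivity)
  have hεa : ε * lam2 ≤ 2 * lam1 := by
    have h' : ε ≤ 2 * lam1 / lam2 := min_le_left _ _
    rw [le_div_iff₀ h2] at h'
    exact h'
  have hεb : ε * (lam1 + 3 * Kc) ≤ lam1 := by
    have h' : ε ≤ lam1 / (lam1 + 3 * Kc) := min_le_right _ _
    rw [le_div_iff₀ (by positivity)] at h'
    exact h'
  have hεone : ε ≤ 1 := by
    have h' : ε * lam1 < lam1 := by nlinarith [mul_pos hεpos hKcpos]
    exact le_of_lt ((mul_lt_mul_iff_of_pos_right h1).mp (by linarith))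
  have hεKc : ε * Kc ≤ lam1 / 3 := by
    have h' : 0 < ε * lam1 := by positivity
    linarith
  -- energy
  set En : ℝ → ℝ := fun t => lam1 * Bform d (β t) (β t) + Cform d (v t) (v t)
      + ε * Cform d (β t) (v t) with hEn
  set En' : ℝ → ℝ := fun t =>
      lam1 * (Bform d (v t) (β t) + Bform d (β t) (v t))
      + (Cform d (Dr t) (v t) + Cform d (v t) (Dr t))
      + ε * (Cform d (v t) (v t) + Cform d (β t) (Dr t)) with hEn'
  have hEnDeriv : ∀ t, HasDerivAt En (En' t) t := by
    intro t
    have hB := hasDerivAt_Bform d β β (v t) (v t) t (hβi t) (hβi t)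
    have hC := hasDerivAt_Cform d v v (Dr t) (Dr t) t (hvi t) (hvi t)
    have hM := hasDerivAt_Cform d β v (v t) (Dr t) t (hβi t) (hvi t)
    exact ((hB.const_mul lam1).add hC).add (hM.const_mul ε)
  -- key differential inequality
  have hkey : ∀ t, En' t ≤ -(ε / 3) * En t := by
    intro t
    have hds := decay_scalar lam1 lam2 Kc ε
      (Bform d (β t) (β t)) (Bform d (β t) (v t)) (Bform d (v t) (v t))
      (Cform d (β t) (β t)) (Cform d (β t) (v t)) (Cform d (v t) (v t))
      h1 h2 hKcpos hεpos hεone hεa hεb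
      (Bform_nonneg d hd _) (Bform_nonneg d hd _) (Cform_nonneg d hd _) (Cform_nonneg d hd _)
      (fun c e => cs_family_B d hd _ _ c e)
      (fun c e => cs_family_C d hd _ _ c e)
      (hCtoB (β t) (hsβ t))
    have hDv := hDecomp t (v t)
    have hDβ := hDecomp t (β t)
    have hDvc : Cform d (Dr t) (v t) = Cform d (v t) (Dr t) := Cform_comm d _ _
    have hBsym : Bform d (v t) (β t) = Bform d (β t) (v t) := Bform_comm d hd _ _
    simp only [hEn', hEn]
    rw [hDvc, hDv, hDβ, hBsym]
    linarith [hds]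
  -- Gronwall
  have hGder : ∀ t, HasDerivAt (fun s => En s * Real.exp (ε / 3 * s))
      (En' t * Real.exp (ε / 3 * t) + En t * (Real.exp (ε / 3 * t) * (ε / 3))) t := by
    intro t
    have he : HasDerivAt (fun s => Real.exp (ε / 3 * s))
        (Real.exp (ε / 3 * t) * (ε / 3)) t := by
      have h' := (Real.hasDerivAt_exp (ε / 3 * t)).comp t
        ((hasDerivAt_id t).const_mul (ε / 3))
      simpa [Function.comp_def] using h'
    exact (hEnDeriv t).mul he
  have hmono : Antitone (fun s => En s * Real.exp (ε / 3 * s)) := by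
    apply antitone_of_deriv_nonpos
    · exact fun t => (hGder t).differentiableAt
    · intro t
      rw [(hGder t).deriv]
      have hk := hkey t
      have hexp : 0 < Real.exp (ε / 3 * t) := Real.exp_pos _
      nlinarith [mul_le_mul_of_nonneg_right hk hexp.le]
  have hEnBound : ∀ t : ℝ, 0 ≤ t → En t ≤ En 0 * Real.exp (-(ε / 3 * t)) := by
    intro t ht
    have hmt := hmono ht
    simp only [mul_zero, Real.exp_zero, mul_one] at hmt
    have hexp : 0 < Real.exp (ε / 3 * t) := Real.exp_pos _
    rw [Real.exp_neg, mul_comm (En 0), ← div_eq_inv_mul, le_div_iff₀ hexp]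
    exact hmt
  -- lower bound on the energy
  have hEnLower : ∀ t, (5 / 6) * (lam1 * Bform d (β t) (β t))
      + (1 / 2) * Cform d (v t) (v t) ≤ En t := by
    intro t
    have hCSC := cs_family_C d hd (β t) (v t) ε 1
    have hCB := hCtoB (β t) (hsβ t)
    have hB1nn := Bform_nonneg d hd (β t)
    have ha' := mul_le_mul_of_nonneg_left hCB (sq_nonneg ε)
    have hb' := mul_le_mul_of_nonneg_right
      (mul_le_mul_of_nonneg_left hεKc hεpos.le) hB1nn
    have hc' := mul_le_mul_of_nonneg_right hεone (mul_nonneg h1.le hB1nn)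
    simp only [hEn]
    nlinarith [hCSC, ha', hb', hc']
  -- limits of the quadratic quantities
  have hEnTendsto : Filter.Tendsto (fun t => En 0 * Real.exp (-(ε / 3 * t)))
      Filter.atTop (nhds 0) := by
    have h' : Filter.Tendsto (fun t : ℝ => ε / 3 * t) Filter.atTop Filter.atTop :=
      Filter.Tendsto.const_mul_atTop (by positivity) Filter.tendsto_id
    have h'' : Filter.Tendsto (fun t : ℝ => Real.exp (-(ε / 3 * t)))
        Filter.atTop (nhds 0) := Real.tendsto_exp_neg_atTop_nhds_zero.comp h'
    have h3 := h''.const_mul (En 0)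
    simpa using h3
  have hqβ : Filter.Tendsto (fun t => ∑ i, (β t i) ^ 2) Filter.atTop (nhds 0) := by
    apply tendsto_zero_of_le_mul _ _ ((5 / 6) * lam1 * μ) (by positivity)
      (fun t => Finset.sum_nonneg fun i _ => sq_nonneg _) _ hEnTendsto
    filter_upwards [Filter.eventually_ge_atTop 0] with t ht
    have hl := hEnLower t
    have hb := hEnBound t ht
    have hC3 := Cform_nonneg d hd (v t)
    have hco := mul_le_mul_of_nonneg_left (hcoer (β t) (hsβ t))
      (by positivity : (0:ℝ) ≤ (5 / 6) * lam1)
    linarith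
  have hqv : Filter.Tendsto (fun t => ∑ i, (v t i) ^ 2) Filter.atTop (nhds 0) := by
    apply tendsto_zero_of_le_mul _ _ ((2 * ∑ i, d i)⁻¹)
      (by rw [hsum]; positivity)
      (fun t => Finset.sum_nonneg fun i _ => sq_nonneg _) _ hEnTendsto
    filter_upwards [Filter.eventually_ge_atTop 0] with t ht
    have hl := hEnLower t
    have hb := hEnBound t ht
    have hB1 := Bform_nonneg d hd (β t)
    have hsd : 0 < ∑ i, d i := Finset.sum_pos (fun i _ => hd i) ⟨0, Finset.mem_univ 0⟩
    have hss := sumsq_le_Cform d hd (v t)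
    have h' := mul_le_mul_of_nonneg_left hss (by positivity : (0:ℝ) ≤ (2 * ∑ i, d i)⁻¹)
    have h'' : (2 * ∑ i, d i)⁻¹ * ((∑ i, d i) * Cform d (v t) (v t))
        = (1 / 2) * Cform d (v t) (v t) := by
      have hSne : (∑ i, d i) ≠ 0 := ne_of_gt hsd
      field_simp
    rw [h''] at h'
    have hlb : 0 ≤ (5 / 6) * (lam1 * Bform d (β t) (β t)) :=
      mul_nonneg (by norm_num) (mul_nonneg h1.le hB1)
    linarith
  -- componentwise limits
  have hβito0 : ∀ i, Filter.Tendsto (fun t => β t i) Filter.atTop (nhds 0) := by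
    intro i
    have hsq : Filter.Tendsto (fun t => (β t i) ^ 2) Filter.atTop (nhds 0) :=
      tendsto_of_tendsto_of_tendsto_of_le_of_le' tendsto_const_nhds hqβ
        (Filter.Eventually.of_forall fun t => sq_nonneg _)
        (Filter.Eventually.of_forall fun t =>
          Finset.single_le_sum (fun j _ => sq_nonneg (β t j)) (Finset.mem_univ i))
    have habs := (Real.continuous_sqrt.tendsto 0).comp hsq
    simp only [Function.comp_def, Real.sqrt_sq_eq_abs, Real.sqrt_zero] at habs
    exact tendsto_zero_iff_abs_tendsto_zero _ |>.mpr habs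
  have hvito0 : ∀ i, Filter.Tendsto (fun t => v t i) Filter.atTop (nhds 0) := by
    intro i
    have hsq : Filter.Tendsto (fun t => (v t i) ^ 2) Filter.atTop (nhds 0) :=
      tendsto_of_tendsto_of_tendsto_of_le_of_le' tendsto_const_nhds hqv
        (Filter.Eventually.of_forall fun t => sq_nonneg _)
        (Filter.Eventually.of_forall fun t =>
          Finset.single_le_sum (fun j _ => sq_nonneg (v t j)) (Finset.mem_univ i))
    have habs := (Real.continuous_sqrt.tendsto 0).comp hsq
    simp only [Function.comp_def, Real.sqrt_sq_eq_abs, Real.sqrt_zero] at habs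
    exact tendsto_zero_iff_abs_tendsto_zero _ |>.mpr habs
  constructor
  · rw [tendsto_pi_nhds]
    intro i
    have h' := (hβito0 i).add_const (d i)
    simp only [hβ, zero_add, sub_add_cancel] at h'
    exact h'
  · rw [tendsto_pi_nhds]
    intro i
    simpa using hvito0 i
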